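/- Let $H \in [0,1)$ and define $B(H) = \displaystyle\int_0^{\infty} \frac{H + (1-H)e^{-2t}}{\cosh(t)\sqrt{1 - (H+(1-H)e^{-2t})^2}}\,dt$. Then for every $\rho > 0$ and every $r > 0$, $\displaystyle\int_0^{r} \frac{x_\rho(t)}{\cosh(t)\sqrt{1 - x_\rho(t)^2}}\,dt \le B(H)$, where $x_\rho(t) = \dfrac{H\cosh(2\rho+2t) + \sinh(2\rho) - H\cosh(2\rho)}{\sinh(2\rho+2t)}$. -/

import Mathlib

/-!
For `t > 0` we have `0 < x_ρ(t) ≤ H + (1 - H) e^{-2t} < 1`, the right-hand side being the limit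
of `x_ρ(t)` as `ρ → ∞`. Since `u ↦ u / √(1 - u²)` is increasing on `[0, 1)`, the integrand over
`(0, r)` is dominated by the (nonnegative) integrand of `B(H)`. The latter is integrable on
`(0, ∞)`: it is at most `(2 / √(1 - H)) / √(e^{2t} - 1)`, the derivative of
`(2 / √(1 - H)) arctan √(e^{2t} - 1)`, which has a finite limit at infinity.
Hence `∫₀^r ≤ ∫₀^∞ = B(H)`.
-/

open Real MeasureTheory Set Filter Topology

lemma div_mul_sqrt_one_sub_sq_le {c u v : ℝ} (hc : 0 < c) (hu : 0 ≤ u) (huv : u ≤ v)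
    (hv : v < 1) : u / (c * √(1 - u ^ 2)) ≤ v / (c * √(1 - v ^ 2)) :=
  div_le_div₀ (hu.trans huv) huv (mul_pos hc (sqrt_pos.2 (by nlinarith)))
    (mul_le_mul_of_nonneg_left (sqrt_le_sqrt (by nlinarith)) hc.le)

lemma div_mul_sqrt_one_sub_sq_le_one_div {c v : ℝ} (hc : 0 < c) (hv0 : 0 ≤ v) (hv1 : v < 1) :
    v / (c * √(1 - v ^ 2)) ≤ 1 / (c * √(1 - v)) :=
  div_le_div₀ zero_le_one hv1.le (mul_pos hc (sqrt_pos.2 (by linarith)))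
    (mul_le_mul_of_nonneg_left (sqrt_le_sqrt (by nlinarith)) hc.le)

lemma sqrt_exp_two_mul_sub_one_le (t : ℝ) :
    √(exp (2 * t) - 1) ≤ 2 * cosh t * √(1 - exp (-2 * t)) := by
  have h : exp (2 * t) - 1 = exp t ^ 2 * (1 - exp (-2 * t)) := by
    rw [mul_sub, mul_one, ← exp_nat_mul, ← exp_add]; norm_num
  rw [h, sqrt_mul (by positivity), sqrt_sq (exp_pos t).le]
  gcongr
  rw [cosh_eq]
  linarith [exp_pos (-t)]

lemma hasDerivAt_arctan_sqrt_exp_two_mul_sub_one {t : ℝ} (ht : 0 < t) :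
    HasDerivAt (fun s => arctan √(exp (2 * s) - 1)) (1 / √(exp (2 * t) - 1)) t := by
  have hpos : 0 < exp (2 * t) - 1 := by linarith [one_lt_exp_iff.2 (by linarith : 0 < 2 * t)]
  have hexp : HasDerivAt (fun s => exp (2 * s) - 1) (exp (2 * t) * 2) t :=
    (((hasDerivAt_id t).const_mul 2).exp.sub_const 1).congr_deriv (by simp)
  refine ((hexp.sqrt hpos.ne').arctan).congr_deriv ?_
  have hs : √(exp (2 * t) - 1) ≠ 0 := (sqrt_pos.2 hpos).ne'
  rw [sq_sqrt hpos.le]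
  field_simp
  ring

lemma integrableOn_one_div_sqrt_exp_two_mul_sub_one :
    IntegrableOn (fun t => 1 / √(exp (2 * t) - 1)) (Ioi 0) := by
  have hlim : Tendsto (fun s => arctan √(exp (2 * s) - 1)) atTop (𝓝 (π / 2)) :=
    (tendsto_nhds_of_tendsto_nhdsWithin tendsto_arctan_atTop).comp <| tendsto_sqrt_atTop.comp <|
      tendsto_atTop_add_const_right _ (-1) <| tendsto_exp_atTop.comp <|
        tendsto_id.const_mul_atTop two_pos
  exact integrableOn_Ioi_deriv_of_nonneg (by fun_prop)
    (fun t ht => hasDerivAt_arctan_sqrt_exp_two_mul_sub_one ht) (fun t _ => by positivity) hlim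

noncomputable def xLim (H t : ℝ) : ℝ := H + (1 - H) * exp (-2 * t)

noncomputable def xRho (H ρ t : ℝ) : ℝ :=
  (H * cosh (2 * ρ + 2 * t) + sinh (2 * ρ) - H * cosh (2 * ρ)) / sinh (2 * ρ + 2 * t)

lemma xLim_mul_sinh_sub (H ρ t : ℝ) :
    xLim H t * sinh (2 * ρ + 2 * t) - (H * cosh (2 * ρ + 2 * t) + sinh (2 * ρ) - H * cosh (2 * ρ))
      = exp (-2 * ρ) / 2 * ((1 - exp (-2 * t) ^ 2) + H * (1 - exp (-2 * t)) ^ 2) := by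
  simp only [xLim, cosh_eq, sinh_eq, neg_add, exp_add, neg_mul, exp_neg]
  field_simp
  ring

lemma one_sub_xLim (H t : ℝ) : 1 - xLim H t = (1 - H) * (1 - exp (-2 * t)) := by
  rw [xLim]; ring

lemma xLim_pos {H : ℝ} (hH0 : 0 ≤ H) (hH1 : H < 1) (t : ℝ) : 0 < xLim H t :=
  add_pos_of_nonneg_of_pos hH0 (mul_pos (sub_pos.2 hH1) (exp_pos _))

lemma xLim_lt_one {H t : ℝ} (hH1 : H < 1) (ht : 0 < t) : xLim H t < 1 := by
  rw [← sub_pos, one_sub_xLim]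
  exact mul_pos (sub_pos.2 hH1) (sub_pos.2 (exp_lt_one_iff.2 (by linarith)))

lemma xRho_pos {H ρ t : ℝ} (hH : 0 ≤ H) (hρ : 0 < ρ) (ht : 0 ≤ t) : 0 < xRho H ρ t := by
  have hcosh : cosh (2 * ρ) ≤ cosh (2 * ρ + 2 * t) :=
    cosh_le_cosh.2 (by rw [abs_of_pos (by linarith), abs_of_pos (by linarith)]; linarith)
  have hsinh : 0 < sinh (2 * ρ) := sinh_pos_iff.2 (by linarith)
  refine div_pos ?_ (sinh_pos_iff.2 (by linarith))
  linarith [mul_nonneg hH (sub_nonneg.2 hcosh)]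

lemma xRho_le_xLim {H ρ t : ℝ} (hH : 0 ≤ H) (hρ : 0 ≤ ρ) (ht : 0 < t) :
    xRho H ρ t ≤ xLim H t := by
  rw [xRho, div_le_iff₀ (sinh_pos_iff.2 (by linarith)), ← sub_nonneg, xLim_mul_sinh_sub]
  have he0 := exp_pos (-2 * t)
  have he1 : exp (-2 * t) < 1 := exp_lt_one_iff.2 (by linarith)
  apply mul_nonneg (by positivity)
  nlinarith [mul_nonneg hH (sq_nonneg (1 - exp (-2 * t)))]

noncomputable def limitIntegrand (H t : ℝ) : ℝ := xLim H t / (cosh t * √(1 - xLim H t ^ 2))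

lemma limitIntegrand_nonneg {H : ℝ} (hH0 : 0 ≤ H) (hH1 : H < 1) (t : ℝ) :
    0 ≤ limitIntegrand H t :=
  div_nonneg (xLim_pos hH0 hH1 t).le (by positivity)

lemma limitIntegrand_le {H t : ℝ} (hH0 : 0 ≤ H) (hH1 : H < 1) (ht : 0 < t) :
    limitIntegrand H t ≤ 2 / √(1 - H) * (1 / √(exp (2 * t) - 1)) := by
  have hH : 0 < √(1 - H) := sqrt_pos.2 (by linarith)
  have hexp : 0 < √(exp (2 * t) - 1) :=
    sqrt_pos.2 (by linarith [one_lt_exp_iff.2 (by linarith : 0 < 2 * t)])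
  calc limitIntegrand H t ≤ 1 / (cosh t * √(1 - xLim H t)) :=
        div_mul_sqrt_one_sub_sq_le_one_div (cosh_pos t) (xLim_pos hH0 hH1 t).le
          (xLim_lt_one hH1 ht)
    _ = 1 / (√(1 - H) * (cosh t * √(1 - exp (-2 * t)))) := by
        rw [one_sub_xLim, sqrt_mul (by linarith)]; ring
    _ ≤ 1 / (√(1 - H) * (√(exp (2 * t) - 1) / 2)) := by
        gcongr; linarith [sqrt_exp_two_mul_sub_one_le t]
    _ = 2 / √(1 - H) * (1 / √(exp (2 * t) - 1)) := by field_simp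

lemma integrableOn_limitIntegrand {H : ℝ} (hH0 : 0 ≤ H) (hH1 : H < 1) :
    IntegrableOn (limitIntegrand H) (Ioi 0) := by
  refine (integrableOn_one_div_sqrt_exp_two_mul_sub_one.const_mul (2 / √(1 - H))).mono' ?_ ?_
  · have : Measurable (limitIntegrand H) := by unfold limitIntegrand xLim; fun_prop
    exact this.aestronglyMeasurable
  · filter_upwards [ae_restrict_mem measurableSet_Ioi] with t ht
    rw [norm_of_nonneg (limitIntegrand_nonneg hH0 hH1 t)]
    exact limitIntegrand_le hH0 hH1 ht

/-- For `H ∈ [0,1)`, `B(H) = ∫_0^∞ (H+(1-H)e^{-2t})/(cosh(t)√(1-(H+(1-H)e^{-2t})²)) dt`,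
and for every `ρ > 0` and `r > 0`,
`∫_0^r x_ρ(t)/(cosh(t)√(1-x_ρ(t)²)) dt ≤ B(H)`, where
`x_ρ(t) = (H cosh(2ρ+2t) + sinh(2ρ) - H cosh(2ρ)) / sinh(2ρ+2t)`. -/
theorem stmt_9 (H : ℝ) (hH : H ∈ Set.Ico (0 : ℝ) 1) (B : ℝ)
    (hB : B = ∫ t in Set.Ioi (0 : ℝ),
      (H + (1 - H) * Real.exp (-2 * t)) /
        (Real.cosh t * Real.sqrt (1 - (H + (1 - H) * Real.exp (-2 * t)) ^ 2)))
    (x : ℝ → ℝ → ℝ)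
    (hx : ∀ ρ t, x ρ t = (H * Real.cosh (2 * ρ + 2 * t) + Real.sinh (2 * ρ) -
      H * Real.cosh (2 * ρ)) / Real.sinh (2 * ρ + 2 * t)) :
    ∀ ρ > (0 : ℝ), ∀ r > (0 : ℝ),
      (∫ t in Set.Ioo (0 : ℝ) r,
        x ρ t / (Real.cosh t * Real.sqrt (1 - x ρ t ^ 2))) ≤ B := by
  obtain ⟨hH0, hH1⟩ := hH
  obtain rfl : x = xRho H := funext₂ hx
  rintro ρ hρ r -
  have hint := integrableOn_limitIntegrand hH0 hH1
  subst hB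
  calc ∫ t in Ioo 0 r, xRho H ρ t / (cosh t * √(1 - xRho H ρ t ^ 2))
      ≤ ∫ t in Ioo 0 r, limitIntegrand H t := by
        refine integral_mono_of_nonneg ?_ (hint.mono_set Ioo_subset_Ioi_self) ?_
        all_goals filter_upwards [ae_restrict_mem measurableSet_Ioo] with t ht
        · exact div_nonneg (xRho_pos hH0 hρ ht.1.le).le (by positivity)
        · exact div_mul_sqrt_one_sub_sq_le (cosh_pos t) (xRho_pos hH0 hρ ht.1.le).le
            (xRho_le_xLim hH0 hρ.le ht.1) (xLim_lt_one hH1 ht.1)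
    _ ≤ ∫ t in Ioi 0, limitIntegrand H t :=
        setIntegral_mono_set hint (.of_forall (limitIntegrand_nonneg hH0 hH1))
          Ioo_subset_Ioi_self.eventuallyLE
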